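/- arXiv:1905.11069 — 3 statements merged into one kernel-verified Lean document; each statement's English description precedes it below -/
import Mathlib

section
/- General quantum Jarzynski equation (standard case): Let (P_i)_{i∈I}, (Q_j)_{j∈J} be projective resolutions of the identity on a finite-dimensional Hilbert space H, U unitary, and G : ℝ^L → ℝ a function with associated spectral values E_i^λ, F_j^λ such that ρ = ∑_i G(E_i) P_i is a density operator (ρ ≥ 0, tr ρ = 1) and p(i) = G(E_i) tr(P_i) > 0 for all i. Assume q(j) := G(F_j) tr(Q_j) satisfies ∑_j q(j) = 1. Then with joint probabilities p(i,j) = tr(Q_j U (P_i/tr P_i) U*) · p(i), one has ∑_{(i,j)} (G(F_j)/G(E_i)) · p(i,j) = 1. -/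
open Matrix ComplexOrder

/-!
Cancelling `p i = G(E_i) d(i)` against the normalisation `1 / d(i)` and the weight
`1 / G(E_i)` turns the sum into `∑_j G(F_j) ∑_i tr(Q_j U P_i U*)`. Since the `P_i` resolve the
identity and `U U* = 1`, the inner sum is `tr Q_j = D(j)`, and `∑_j G(F_j) D(j) = 1`.
-/

namespace Matrix

variable {m ι R : Type*} [Fintype m] [DecidableEq m] [Fintype ι] [CommRing R] [StarRing R]

theorem sum_mul_mul_mul_conjTranspose_of_sum_eq_one (A U : Matrix m m R)
    (hU : U ∈ unitaryGroup m R) {P : ι → Matrix m m R} (hP : ∑ i, P i = 1) :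
    ∑ i, A * U * P i * Uᴴ = A := by
  rw [← Finset.sum_mul, ← Finset.mul_sum, hP, mul_one, mul_assoc, ← star_eq_conjTranspose,
    mem_unitaryGroup_iff.mp hU, mul_one]

theorem sum_trace_mul_mul_mul_conjTranspose_of_sum_eq_one (A U : Matrix m m R)
    (hU : U ∈ unitaryGroup m R) {P : ι → Matrix m m R} (hP : ∑ i, P i = 1) :
    ∑ i, (A * U * P i * Uᴴ).trace = A.trace := by
  rw [← trace_sum, sum_mul_mul_mul_conjTranspose_of_sum_eq_one A U hU hP]

end Matrix

theorem stmt_10_general {n L : ℕ} {I J : Type*} [Fintype I] [Fintype J]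
    (P : I → Matrix (Fin n) (Fin n) ℂ)
    (hPsum : ∑ i, P i = 1)
    (Q : J → Matrix (Fin n) (Fin n) ℂ)
    (d : I → ℕ)
    (D : J → ℕ) (hD : ∀ j, (Q j).trace = (D j : ℂ))
    (U : Matrix (Fin n) (Fin n) ℂ) (hU : U ∈ Matrix.unitaryGroup (Fin n) ℂ)
    (G : (Fin L → ℝ) → ℝ) (E : I → Fin L → ℝ) (F : J → Fin L → ℝ)
    -- first-measurement probabilities are positive
    (p : I → ℝ) (hp : ∀ i, p i = G (E i) * (d i : ℝ)) (hppos : ∀ i, 0 < p i)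
    -- hypothetical probabilities sum to one
    (q : J → ℝ) (hq : ∀ j, q j = G (F j) * (D j : ℝ)) (hqsum : ∑ j, q j = 1)
    -- physical joint probabilities
    (prob : I × J → ℝ)
    (hprob : ∀ i j, prob (i, j) =
      ((Q j * U * P i * Uᴴ).trace / (d i : ℂ)).re * p i) :
    ∑ ij : I × J, (G (F ij.2) / G (E ij.1)) * prob ij = 1 := by
  have hweight : ∀ i j, G (F j) / G (E i) * prob (i, j) = G (F j) * (Q j * U * P i * Uᴴ).trace.re := by
    intro i j
    have hpi : G (E i) * (d i : ℝ) ≠ 0 := hp i ▸ (hppos i).ne'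
    rw [hprob, hp, ← Complex.ofReal_natCast, Complex.div_ofReal_re]
    field_simp [left_ne_zero_of_mul hpi, right_ne_zero_of_mul hpi]
  have hstoch : ∀ j, ∑ i, (Q j * U * P i * Uᴴ).trace.re = D j := by
    intro j
    rw [← Complex.re_sum, sum_trace_mul_mul_mul_conjTranspose_of_sum_eq_one _ U hU hPsum, hD]
    simp
  calc ∑ ij : I × J, G (F ij.2) / G (E ij.1) * prob ij
      = ∑ j, G (F j) * ∑ i, (Q j * U * P i * Uᴴ).trace.re := by
        simp only [Fintype.sum_prod_type, hweight, Finset.mul_sum]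
        exact Finset.sum_comm
    _ = ∑ j, q j := by simp only [hstoch, hq]
    _ = 1 := hqsum

/-- General quantum Jarzynski equation (standard case): if the initial density
operator is a function `G` of commuting observables, `ρ = ∑_i G(E_i) P_i`, then
the expectation of `G(F_j)/G(E_i)` with respect to the physical joint
probabilities equals 1. -/
theorem stmt_10 {n L : ℕ} {I J : Type*} [Fintype I] [Fintype J]
    (P : I → Matrix (Fin n) (Fin n) ℂ)
    (hPherm : ∀ i, (P i).IsHermitian) (hPidem : ∀ i, P i * P i = P i)
    (hPorth : ∀ i i', i ≠ i' → P i * P i' = 0)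
    (hPsum : ∑ i, P i = 1)
    (Q : J → Matrix (Fin n) (Fin n) ℂ)
    (hQherm : ∀ j, (Q j).IsHermitian) (hQidem : ∀ j, Q j * Q j = Q j)
    (hQorth : ∀ j j', j ≠ j' → Q j * Q j' = 0)
    (hQsum : ∑ j, Q j = 1)
    (d : I → ℕ) (hd : ∀ i, (P i).trace = (d i : ℂ)) (hd0 : ∀ i, 0 < d i)
    (D : J → ℕ) (hD : ∀ j, (Q j).trace = (D j : ℂ)) (hD0 : ∀ j, 0 < D j)
    (U : Matrix (Fin n) (Fin n) ℂ) (hU : U ∈ Matrix.unitaryGroup (Fin n) ℂ)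
    (G : (Fin L → ℝ) → ℝ) (E : I → Fin L → ℝ) (F : J → Fin L → ℝ)
    (ρ : Matrix (Fin n) (Fin n) ℂ) (hρ : ρ = ∑ i, (G (E i) : ℂ) • P i)
    (hρpos : ρ.PosSemidef) (hρtr : ρ.trace = 1)
    -- first-measurement probabilities are positive
    (p : I → ℝ) (hp : ∀ i, p i = G (E i) * (d i : ℝ)) (hppos : ∀ i, 0 < p i)
    -- hypothetical probabilities sum to one
    (q : J → ℝ) (hq : ∀ j, q j = G (F j) * (D j : ℝ)) (hGF : ∀ j, 0 < G (F j)) (hqsum : ∑ j, q j = 1)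
    -- physical joint probabilities
    (prob : I × J → ℝ)
    (hprob : ∀ i j, prob (i, j) =
      ((Q j * U * P i * Uᴴ).trace / (d i : ℂ)).re * p i) :
    ∑ ij : I × J, (G (F ij.2) / G (E ij.1)) * prob ij = 1 :=
  stmt_10_general P hPsum Q d D hD U hU G E F p hp hppos q hq hqsum prob hprob
end

section
/- Abstract Crooks fluctuation theorem: In a modified statistical model (I, J, P, d, D) with positive marginal p, modified doubly stochastic π, positive hypothetical probabilities q, random variable Y(i,j) = d(i)q(j)/(D(j)p(i)), and reciprocal model P̃(j,i) = π(j|i)(d(i)/D(j))q(j) with random variable Ỹ(j,i) = 1/Y(i,j): for every value y attained by Y, Prob_P(Y = y) / Prob_{P̃}(Ỹ = 1/y) = 1/y, i.e. Prob_{P̃}(Ỹ = 1/y) = y · Prob_P(Y = y). -/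
/-!
The reversed pair `(j, i)` lies in the fibre `Ỹ = 1/y` exactly when `(i, j)` lies in the fibre
`Y = y`, and on that fibre `P̃(j, i) = Y(i, j) · P(i, j) = y · P(i, j)`. Reindexing the sum along
the swap therefore pulls out the constant factor `y`.
-/

def Equiv.fiberInvSwap {α β K : Type*} [DivisionRing K] (Y : α × β → K) (Yt : β × α → K)
    (hYt : ∀ a b, Yt (b, a) = 1 / Y (a, b)) (y : K) :
    {ba : β × α // Yt ba = 1 / y} ≃ {ab : α × β // Y ab = y} :=
  (Equiv.prodComm β α).subtypeEquiv fun ⟨b, a⟩ => by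
    rw [hYt]
    simp only [one_div, inv_inj, Equiv.prodComm_apply, Prod.swap_prod_mk]

theorem tsum_fiber_inv_eq_mul_tsum_fiber {α β K : Type*} [DivisionRing K] [TopologicalSpace K]
    [IsTopologicalSemiring K] [T2Space K]
    (F : α × β → K) (G : β × α → K) (Y : α × β → K) (Yt : β × α → K)
    (hG : ∀ a b, G (b, a) = Y (a, b) * F (a, b)) (hYt : ∀ a b, Yt (b, a) = 1 / Y (a, b)) (y : K) :
    ∑' ba : {ba : β × α // Yt ba = 1 / y}, G ba = y * ∑' ab : {ab : α × β // Y ab = y}, F ab := by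
  rw [← (Equiv.fiberInvSwap Y Yt hYt y).symm.tsum_eq, ← tsum_mul_left]
  refine tsum_congr fun ⟨⟨a, b⟩, hab⟩ => ?_
  simp only [Equiv.fiberInvSwap, Equiv.subtypeEquiv_symm, Equiv.subtypeEquiv_apply,
    Equiv.prodComm_symm, Equiv.prodComm_apply, Prod.swap_prod_mk]
  rw [hG, hab]

theorem stmt_14_general {I J : Type*}
    (π : I → J → ℝ)
    (p : I → ℝ) (hppos : ∀ i, 0 < p i)
    (d : I → ℕ)
    (D : J → ℕ)
    (q : J → ℝ)
    (P : I × J → ℝ) (hP : ∀ i j, P (i, j) = π i j * p i)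
    (Pt : J × I → ℝ)
    (hPt : ∀ j i, Pt (j, i) = π i j * ((d i : ℝ) / (D j : ℝ)) * q j)
    (Y : I × J → ℝ)
    (hY : ∀ i j, Y (i, j) = (d i : ℝ) * q j / ((D j : ℝ) * p i))
    (Yt : J × I → ℝ) (hYt : ∀ j i, Yt (j, i) = 1 / Y (i, j))
    (y : ℝ) :
    ∑' ji : {ji : J × I // Yt ji = 1 / y}, Pt ji
      = y * ∑' ij : {ij : I × J // Y ij = y}, P ij := by
  refine tsum_fiber_inv_eq_mul_tsum_fiber P Pt Y Yt (fun i j => ?_) (fun i j => hYt j i) y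
  rw [hPt, hY, hP]
  have := (hppos i).ne'
  field_simp

/-- Abstract Crooks fluctuation theorem: the reciprocal probability that
`Ỹ = 1/y` equals `y` times the probability that `Y = y`. -/
theorem stmt_14 {I J : Type*} [Countable I] [Countable J]
    (π : I → J → ℝ) (hπ0 : ∀ i j, 0 ≤ π i j)
    (hπrow : ∀ i, ∑' j : J, π i j = 1)
    (p : I → ℝ) (hppos : ∀ i, 0 < p i) (hpsum : ∑' i : I, p i = 1)
    (d : I → ℕ) (hd : ∀ i, 0 < d i)
    (D : J → ℕ) (hD : ∀ j, 0 < D j)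
    (hmds : ∀ j : J, ∑' i : I, π i j * (d i : ℝ) = (D j : ℝ))
    (q : J → ℝ) (hqpos : ∀ j, 0 < q j) (hqsum : ∑' j : J, q j = 1)
    (P : I × J → ℝ) (hP : ∀ i j, P (i, j) = π i j * p i)
    (Pt : J × I → ℝ)
    (hPt : ∀ j i, Pt (j, i) = π i j * ((d i : ℝ) / (D j : ℝ)) * q j)
    (Y : I × J → ℝ)
    (hY : ∀ i j, Y (i, j) = (d i : ℝ) * q j / ((D j : ℝ) * p i))
    (Yt : J × I → ℝ) (hYt : ∀ j i, Yt (j, i) = 1 / Y (i, j))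
    (y : ℝ) (hy : ∃ ij : I × J, Y ij = y) :
    ∑' ji : {ji : J × I // Yt ji = 1 / y}, Pt ji
      = y * ∑' ij : {ij : I × J // Y ij = y}, P ij :=
  stmt_14_general π p hppos d D q P hP Pt hPt Y hY Yt hYt y
end

section
/- Crooks implies Jarzynski: If P and P̃ are probability distributions on countable E = I × J and Ẽ = J × I respectively, Y : E → ℝ₊ and Ỹ(j,i) = 1/Y(i,j), and for every y in the range Y of values, Prob_{P̃}(Ỹ = 1/y) = y · Prob_P(Y = y), then the expectation ⟨Y⟩_P = ∑_y Prob_P(Y = y) · y = 1. -/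
open scoped ENNReal

/-! Group the expectation by the level sets of `Y`: the level set `{Y = y}` contributes
`y · Prob_P(Y = y)`, which by Crooks is `Prob_{P̃}(Ỹ = 1/y)`. As `y` runs over the values of `Y`,
`1/y` runs over those of `Ỹ`, so the contributions add up to the total mass `1` of `P̃`.
Summing in `ℝ≥0∞` makes the regrouping unconditional; summability of `Y · P` is a by-product. -/

theorem summable_of_tsum_ne_zero {α M : Type*} [AddCommMonoid M] [TopologicalSpace M]
    {f : α → M} (h : ∑' a, f a ≠ 0) : Summable f :=
  not_imp_comm.1 tsum_eq_zero_of_not_summable h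

theorem tsum_eq_toReal_tsum_ofReal {α : Type*} {f : α → ℝ} (hf : ∀ a, 0 ≤ f a) :
    ∑' a, f a = (∑' a, ENNReal.ofReal (f a)).toReal := by
  rw [ENNReal.tsum_toReal_eq fun _ ↦ ENNReal.ofReal_ne_top]
  simp only [ENNReal.toReal_ofReal (hf _)]

namespace ENNReal

theorem ofReal_tsum_subtype_of_nonneg {α : Type*} {f : α → ℝ} (hf_nonneg : ∀ a, 0 ≤ f a)
    (hf : Summable f) (p : α → Prop) :
    ENNReal.ofReal (∑' a : {a // p a}, f a) = ∑' a : {a // p a}, ENNReal.ofReal (f a) :=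
  ENNReal.ofReal_tsum_of_nonneg (fun a ↦ hf_nonneg a) (hf.subtype {a | p a})

theorem tsum_eq_tsum_tsum_fiber {α β : Type*} (f : α → β) (p : α → ℝ≥0∞) :
    ∑' a, p a = ∑' y, ∑' a : {a // f a = y}, p a :=
  (ENNReal.tsum_fiberwise p f).symm

theorem tsum_ofReal_mul_eq_tsum_of_fiber_inv {α β : Type*} (f : α → ℝ) (p : α → ℝ≥0∞)
    (g : β → ℝ) (q : β → ℝ≥0∞)
    (h : ∀ y, ∑' b : {b // g b = y⁻¹}, q b = ENNReal.ofReal y * ∑' a : {a // f a = y}, p a) :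
    ∑' a, ENNReal.ofReal (f a) * p a = ∑' b, q b :=
  calc ∑' a, ENNReal.ofReal (f a) * p a
      = ∑' y, ∑' a : {a // f a = y}, ENNReal.ofReal (f a) * p a := tsum_eq_tsum_tsum_fiber f _
    _ = ∑' y, ∑' b : {b // g b = y⁻¹}, q b := by
        refine tsum_congr fun y ↦ ?_
        rw [h, ← ENNReal.tsum_mul_left]
        exact tsum_congr fun a ↦ by rw [a.2]
    _ = ∑' y, ∑' b : {b // g b = y}, q b :=
        (Equiv.inv ℝ).tsum_eq fun y ↦ ∑' b : {b // g b = y}, q b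
    _ = ∑' b, q b := (tsum_eq_tsum_tsum_fiber g q).symm

end ENNReal

theorem stmt_15_general {I J : Type*}
    (P : I × J → ℝ) (hP0 : ∀ ij, 0 ≤ P ij)
    (hPsum : ∑' ij : I × J, P ij = 1)
    (Pt : J × I → ℝ) (hPt0 : ∀ ji, 0 ≤ Pt ji)
    (hPtsum : ∑' ji : J × I, Pt ji = 1)
    (Y : I × J → ℝ) (hYpos : ∀ ij, 0 < Y ij)
    (Yt : J × I → ℝ) (hYt : ∀ j i, Yt (j, i) = 1 / Y (i, j))
    (hCrooks : ∀ y : ℝ, (∃ ij : I × J, Y ij = y) →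
      ∑' ji : {ji : J × I // Yt ji = 1 / y}, Pt ji
        = y * ∑' ij : {ij : I × J // Y ij = y}, P ij) :
    ∑' ij : I × J, Y ij * P ij = 1 := by
  have hP : Summable P := summable_of_tsum_ne_zero (by simp [hPsum])
  have hPt : Summable Pt := summable_of_tsum_ne_zero (by simp [hPtsum])
  have hfiber : ∀ y, ∑' ji : {ji // Yt ji = y⁻¹}, ENNReal.ofReal (Pt ji)
      = ENNReal.ofReal y * ∑' ij : {ij // Y ij = y}, ENNReal.ofReal (P ij) := by
    intro y
    by_cases hy : ∃ ij, Y ij = y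
    · obtain ⟨ij, rfl⟩ := hy
      rw [← ENNReal.ofReal_tsum_subtype_of_nonneg hPt0 hPt,
        ← ENNReal.ofReal_tsum_subtype_of_nonneg hP0 hP,
        ← ENNReal.ofReal_mul (hYpos ij).le, ← one_div, hCrooks _ ⟨ij, rfl⟩]
    · have hYt_fiber : IsEmpty {ji // Yt ji = y⁻¹} :=
        ⟨fun ⟨(j, i), hji⟩ ↦ hy ⟨(i, j), inv_injective (by rwa [hYt, one_div] at hji)⟩⟩
      have hY_fiber : IsEmpty {ij // Y ij = y} := ⟨fun ⟨ij, hij⟩ ↦ hy ⟨ij, hij⟩⟩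
      simp only [tsum_empty, mul_zero]
  have hJarzynski : ∑' ij, ENNReal.ofReal (Y ij) * ENNReal.ofReal (P ij) = 1 := by
    rw [ENNReal.tsum_ofReal_mul_eq_tsum_of_fiber_inv Y _ Yt (fun ji ↦ ENNReal.ofReal (Pt ji))
        hfiber,
      ← ENNReal.ofReal_tsum_of_nonneg hPt0 hPt, hPtsum, ENNReal.ofReal_one]
  rw [tsum_eq_toReal_tsum_ofReal fun ij ↦ mul_nonneg (hYpos ij).le (hP0 ij)]
  simp only [ENNReal.ofReal_mul (hYpos _).le, hJarzynski, ENNReal.toReal_one]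

/-- Crooks implies Jarzynski: if for every attained value `y` of `Y` one has
`Prob_{P̃}(Ỹ = 1/y) = y · Prob_P(Y = y)`, then `⟨Y⟩_P = 1`. -/
theorem stmt_15 {I J : Type*} [Countable I] [Countable J]
    (P : I × J → ℝ) (hP0 : ∀ ij, 0 ≤ P ij)
    (hPsum : ∑' ij : I × J, P ij = 1)
    (Pt : J × I → ℝ) (hPt0 : ∀ ji, 0 ≤ Pt ji)
    (hPtsum : ∑' ji : J × I, Pt ji = 1)
    (Y : I × J → ℝ) (hYpos : ∀ ij, 0 < Y ij)
    (Yt : J × I → ℝ) (hYt : ∀ j i, Yt (j, i) = 1 / Y (i, j))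
    (hCrooks : ∀ y : ℝ, (∃ ij : I × J, Y ij = y) →
      ∑' ji : {ji : J × I // Yt ji = 1 / y}, Pt ji
        = y * ∑' ij : {ij : I × J // Y ij = y}, P ij) :
    ∑' ij : I × J, Y ij * P ij = 1 :=
  stmt_15_general P hP0 hPsum Pt hPt0 hPtsum Y hYpos Yt hYt hCrooks
end
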